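/- arXiv:1506.01051 — 8 statements merged into one kernel-verified Lean document; each statement's English description precedes it below -/
import Mathlib

section
/- Fix α > 2, γ > 0, S > 0 and c̄ > 0 with c̄ > (1 + 2/(α−2))γ. Define G = (1/S)·(4γ/(α−2)² + γ/(α−1) + 2γ/(α−2) + γc̄/(α−1)) / (c̄ − (1 + 2/(α−2))γ), and consider the function EE(K) = K(1 − GK)/(C₀ + C₁K + D₀c̄K + D₁c̄K²) for K ∈ (0, 1/G), where C₀, C₁, D₀, D₁ > 0. Then EE is maximized at K⋆ = (√((GC₀)² + C₀D₁c̄ + C₀G(C₁ + D₀c̄)) − GC₀)/(D₁c̄ + G(C₁ + D₀c̄)). -/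
/-- Theorem 3: the EE over K ∈ (0, 1/G) with fixed antennas-per-user ratio cbar
is maximized at the stated K⋆. -/
theorem optimal_K_maximizes_EE
    (α γ S cbar C₀ C₁ D₀ D₁ : ℝ) (hα : 2 < α) (hγ : 0 < γ) (hS : 0 < S)
    (hcbar : 0 < cbar) (hfeas : (1 + 2 / (α - 2)) * γ < cbar)
    (hC₀ : 0 < C₀) (hC₁ : 0 < C₁) (hD₀ : 0 < D₀) (hD₁ : 0 < D₁)
    (G : ℝ)
    (hG : G = (1 / S) * (4 * γ / (α - 2) ^ 2 + γ / (α - 1) + 2 * γ / (α - 2)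
        + γ * cbar / (α - 1)) / (cbar - (1 + 2 / (α - 2)) * γ))
    (Kstar : ℝ)
    (hKstar : Kstar = (Real.sqrt ((G * C₀) ^ 2 + C₀ * D₁ * cbar + C₀ * G * (C₁ + D₀ * cbar))
        - G * C₀) / (D₁ * cbar + G * (C₁ + D₀ * cbar))) :
    Kstar ∈ Set.Ioo 0 (1 / G) ∧
    ∀ K ∈ Set.Ioo (0 : ℝ) (1 / G),
      K * (1 - G * K) / (C₀ + C₁ * K + D₀ * cbar * K + D₁ * cbar * K ^ 2)
        ≤ Kstar * (1 - G * Kstar)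
          / (C₀ + C₁ * Kstar + D₀ * cbar * Kstar + D₁ * cbar * Kstar ^ 2) := by
  have h2 : (0:ℝ) < α - 2 := by linarith
  have h1 : (0:ℝ) < α - 1 := by linarith
  have hden : 0 < cbar - (1 + 2 / (α - 2)) * γ := by linarith
  have hnum : 0 < 4 * γ / (α - 2) ^ 2 + γ / (α - 1) + 2 * γ / (α - 2)
      + γ * cbar / (α - 1) := by
    have h2sq : (0:ℝ) < (α - 2) ^ 2 := pow_pos h2 2
    have t1 : 0 < 4 * γ / (α - 2) ^ 2 := div_pos (by linarith) h2sq
    have t2 : 0 < γ / (α - 1) := div_pos hγ h1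
    have t3 : 0 < 2 * γ / (α - 2) := div_pos (by linarith) h2
    have t4 : 0 < γ * cbar / (α - 1) := div_pos (mul_pos hγ hcbar) h1
    linarith
  have hG0 : 0 < G := by
    rw [hG]
    exact div_pos (mul_pos (by positivity) hnum) hden
  have hQ : 0 < D₁ * cbar + G * (C₁ + D₀ * cbar) := by positivity
  set s : ℝ := Real.sqrt ((G * C₀) ^ 2 + C₀ * D₁ * cbar + C₀ * G * (C₁ + D₀ * cbar))
    with hsdef
  have harg : 0 ≤ (G * C₀) ^ 2 + C₀ * D₁ * cbar + C₀ * G * (C₁ + D₀ * cbar) := by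
    positivity
  have hs2 : s ^ 2 = (G * C₀) ^ 2 + C₀ * (D₁ * cbar + G * (C₁ + D₀ * cbar)) := by
    rw [hsdef, Real.sq_sqrt harg]; ring
  have hsgt : G * C₀ < s := by
    have hs0 : 0 ≤ s := Real.sqrt_nonneg _
    nlinarith [mul_pos hC₀ hQ, mul_pos hG0 hC₀]
  have hK0 : 0 < Kstar := by
    rw [hKstar]
    exact div_pos (by linarith) hQ
  have hmul : Kstar * (D₁ * cbar + G * (C₁ + D₀ * cbar)) = s - G * C₀ := by
    rw [hKstar]; field_simp
  -- key quadratic identity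
  have hid : (D₁ * cbar + G * (C₁ + D₀ * cbar)) * Kstar ^ 2
      + 2 * (G * C₀) * Kstar = C₀ := by
    apply mul_left_cancel₀ hQ.ne'
    linear_combination (Kstar * (D₁ * cbar + G * (C₁ + D₀ * cbar)) + s + G * C₀) * hmul
      + hs2
  have hKlt : Kstar < 1 / G := by
    rw [lt_div_iff₀ hG0]
    nlinarith [mul_pos hQ (pow_pos hK0 2), mul_pos hG0 hK0]
  refine ⟨⟨hK0, hKlt⟩, ?_⟩
  rintro K ⟨hKpos, hKub⟩
  have hqK : 0 < C₀ + C₁ * K + D₀ * cbar * K + D₁ * cbar * K ^ 2 := by positivity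
  have hqL : 0 < C₀ + C₁ * Kstar + D₀ * cbar * Kstar + D₁ * cbar * Kstar ^ 2 := by
    positivity
  rw [div_le_div_iff₀ hqK hqL]
  have hpos : 0 < G * C₀ + (D₁ * cbar + G * (C₁ + D₀ * cbar)) * Kstar := by positivity
  have key : Kstar * (1 - G * Kstar) * (C₀ + C₁ * K + D₀ * cbar * K + D₁ * cbar * K ^ 2)
      - K * (1 - G * K) * (C₀ + C₁ * Kstar + D₀ * cbar * Kstar + D₁ * cbar * Kstar ^ 2)
      = (Kstar - K) ^ 2 * (G * C₀ + (D₁ * cbar + G * (C₁ + D₀ * cbar)) * Kstar) := by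
    linear_combination (K - Kstar) * hid
  have hnn : 0 ≤ (Kstar - K) ^ 2
      * (G * C₀ + (D₁ * cbar + G * (C₁ + D₀ * cbar)) * Kstar) :=
    mul_nonneg (sq_nonneg _) hpos.le
  linarith [key, hnn]
end

section
/- Let g(K) = K(1 − GK)/(C₀ + aK + bK²) with G, C₀, a, b > 0, defined on (0, 1/G). Then g is strictly quasi-concave on (0, 1/G): it is strictly increasing on (0, K⋆) and strictly decreasing on (K⋆, 1/G), where K⋆ = (√((GC₀)² + C₀b + C₀Ga) − GC₀)/(b + Ga). -/
/-!
The derivative of `g` has the sign of the quadratic `C₀ - 2GC₀K - (b + Ga)K²`, whose positive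
root is `K⋆`. Using `(b + Ga)K⋆² + 2GC₀K⋆ = C₀`, this quadratic factors as
`(K⋆ - K)((b + Ga)(K⋆ + K) + 2GC₀)`, and the second factor is positive for `K > 0`.
-/

open Set

section QuadraticRoot

variable {c p q : ℝ}

theorem quadratic_root_eq (hc : c ≠ 0) (hd : 0 ≤ p ^ 2 + c * q) :
    c * ((√(p ^ 2 + c * q) - p) / c) ^ 2 + 2 * p * ((√(p ^ 2 + c * q) - p) / c) = q := by
  field_simp
  linear_combination Real.sq_sqrt hd

theorem quadratic_root_pos (hc : 0 < c) (hq : 0 < q) : 0 < (√(p ^ 2 + c * q) - p) / c := by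
  have hlt : p < √(p ^ 2 + c * q) :=
    calc p ≤ |p| := le_abs_self p
      _ = √(p ^ 2) := (Real.sqrt_sq_eq_abs p).symm
      _ < √(p ^ 2 + c * q) := Real.sqrt_lt_sqrt (sq_nonneg p) (by simpa using mul_pos hc hq)
  exact div_pos (sub_pos.2 hlt) hc

theorem sub_sub_eq_mul_of_root {k : ℝ} (hk : c * k ^ 2 + 2 * p * k = q) (x : ℝ) :
    q - 2 * p * x - c * x ^ 2 = (k - x) * (c * (k + x) + 2 * p) := by
  linear_combination -hk

end QuadraticRoot

theorem hasDerivAt_mul_one_sub_div_quadratic {G C₀ a b x : ℝ} (hx : C₀ + a * x + b * x ^ 2 ≠ 0) :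
    HasDerivAt (fun K : ℝ => K * (1 - G * K) / (C₀ + a * K + b * K ^ 2))
      ((C₀ - 2 * (G * C₀) * x - (b + G * a) * x ^ 2) / (C₀ + a * x + b * x ^ 2) ^ 2) x := by
  have hnum : HasDerivAt (fun K : ℝ => K * (1 - G * K)) (1 - 2 * G * x) x :=
    ((hasDerivAt_id' x).mul (((hasDerivAt_id' x).const_mul G).const_sub 1)).congr_deriv
      (by ring)
  have hden : HasDerivAt (fun K : ℝ => C₀ + a * K + b * K ^ 2) (a + 2 * b * x) x :=
    ((((hasDerivAt_id' x).const_mul a).const_add C₀).add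
      ((hasDerivAt_pow 2 x).const_mul b)).congr_deriv (by ring)
  refine (hnum.div hden hx).congr_deriv ?_
  field_simp
  ring

theorem strictMonoOn_Ioc_and_strictAntiOn_Ici_of_hasDerivAt {f w : ℝ → ℝ} {l k : ℝ} (hlk : l < k)
    (hf : ∀ x, l < x → HasDerivAt f ((k - x) * w x) x) (hw : ∀ x, l < x → 0 < w x) :
    StrictMonoOn f (Ioc l k) ∧ StrictAntiOn f (Ici k) := by
  have hcont : ∀ s ⊆ Ioi l, ContinuousOn f s := fun s hs x hx =>
    (hf x (hs hx)).continuousAt.continuousWithinAt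
  constructor
  · refine strictMonoOn_of_deriv_pos (convex_Ioc l k) (hcont _ Ioc_subset_Ioi_self) ?_
    intro x hx
    rw [interior_Ioc] at hx
    obtain ⟨hlx, hxk⟩ := hx
    rw [(hf x hlx).deriv]
    exact mul_pos (sub_pos.2 hxk) (hw x hlx)
  · refine strictAntiOn_of_deriv_neg (convex_Ici k) (hcont _ (Ici_subset_Ioi.2 hlk)) ?_
    intro x hx
    rw [interior_Ici] at hx
    have hlx : l < x := hlk.trans hx
    rw [(hf x hlx).deriv]
    exact mul_neg_of_neg_of_pos (sub_neg.2 hx) (hw x hlx)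

/-- g(K) = K(1 − GK)/(C₀ + aK + bK²) is strictly unimodal on (0, 1/G):
increasing up to K⋆ and decreasing after. -/
theorem ee_unimodal_in_K
    (G C₀ a b : ℝ) (hG : 0 < G) (hC₀ : 0 < C₀) (ha : 0 < a) (hb : 0 < b)
    (Kstar : ℝ)
    (hKstar : Kstar = (Real.sqrt ((G * C₀) ^ 2 + C₀ * b + C₀ * G * a) - G * C₀)
        / (b + G * a)) :
    StrictMonoOn (fun K : ℝ => K * (1 - G * K) / (C₀ + a * K + b * K ^ 2))
      (Set.Ioc 0 Kstar) ∧
    StrictAntiOn (fun K : ℝ => K * (1 - G * K) / (C₀ + a * K + b * K ^ 2))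
      (Set.Ico Kstar (1 / G)) := by
  have hc : 0 < b + G * a := by positivity
  rw [show (G * C₀) ^ 2 + C₀ * b + C₀ * G * a = (G * C₀) ^ 2 + (b + G * a) * C₀ by ring]
    at hKstar
  have hroot : (b + G * a) * Kstar ^ 2 + 2 * (G * C₀) * Kstar = C₀ :=
    hKstar ▸ quadratic_root_eq hc.ne' (by positivity)
  have hKpos : 0 < Kstar := hKstar ▸ quadratic_root_pos hc hC₀
  obtain ⟨hmono, hanti⟩ := strictMonoOn_Ioc_and_strictAntiOn_Ici_of_hasDerivAt hKpos
    (w := fun x => ((b + G * a) * (Kstar + x) + 2 * (G * C₀)) / (C₀ + a * x + b * x ^ 2) ^ 2)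
    (fun x hx => by
      have hderiv := hasDerivAt_mul_one_sub_div_quadratic (G := G) (x := x)
        (ne_of_gt (by positivity : 0 < C₀ + a * x + b * x ^ 2))
      rwa [sub_sub_eq_mul_of_root hroot, mul_div_assoc] at hderiv)
    (fun x hx => by positivity)
  exact ⟨hmono, hanti.mono Ico_subset_Ici_self⟩
end

section
/- The function h(M) = (1 − (K/S)·B̄₁(M)γ/(M − B̄₂γ))/(C₀ + C₁K + D₀M + D₁MK), where B̄₁(M) = Kq + M/(α−1), B̄₂ = K(1 + 2/(α−2)), q = 4/(α−2)² + 1/(α−1) + 2/(α−2), is quasi-concave in M on the domain M > B̄₂γ, for any fixed K, S, γ, C₀, C₁, D₀, D₁ > 0 and α > 2. -/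
open Set

private lemma affine_convexOn (s : Set ℝ) (hs : Convex ℝ s) (m b : ℝ) :
    ConvexOn ℝ s (fun x : ℝ => m * x + b) := by
  refine ⟨hs, fun x _ y _ a c ha hc hab => ?_⟩
  simp only [smul_eq_mul]
  refine le_of_eq ?_
  linear_combination (-b) * hab

private lemma inv_shift_convexOn (t : ℝ) :
    ConvexOn ℝ (Set.Ioi t) (fun x : ℝ => (x - t)⁻¹) := by
  have h0 : ConvexOn ℝ (Set.Ioi (0:ℝ)) (fun x : ℝ => x⁻¹) := by
    have := (strictConvexOn_zpow (m := -1) (by norm_num) (by norm_num)).convexOn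
    exact this.congr (fun x _ => by simp [zpow_neg_one])
  let A : ℝ →ᵃ[ℝ] ℝ :=
    AffineMap.mk' (fun x => x - t) LinearMap.id t (by intro p; simp)
  have hA : ConvexOn ℝ (A ⁻¹' (Set.Ioi 0)) ((fun x : ℝ => x⁻¹) ∘ A) :=
    h0.comp_affineMap A
  have hset : A ⁻¹' (Set.Ioi 0) = Set.Ioi t := by
    ext x
    simp [A, AffineMap.coe_mk', sub_pos]
  rw [hset] at hA
  exact hA.congr (fun x _ => by simp [A, AffineMap.coe_mk'])

/-- The EE objective over M (for fixed K) is quasi-concave on M > B̄₂γ. -/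
theorem ee_quasiconcave_in_M
    (K S γ C₀ C₁ D₀ D₁ α : ℝ) (hK : 0 < K) (hS : 0 < S) (hγ : 0 < γ)
    (hC₀ : 0 < C₀) (hC₁ : 0 < C₁) (hD₀ : 0 < D₀) (hD₁ : 0 < D₁) (hα : 2 < α)
    (q B₂ : ℝ)
    (hq : q = 4 / (α - 2) ^ 2 + 1 / (α - 1) + 2 / (α - 2))
    (hB₂ : B₂ = K * (1 + 2 / (α - 2))) :
    QuasiconcaveOn ℝ (Set.Ioi (B₂ * γ))
      (fun M : ℝ => (1 - (K / S) * (K * q + M / (α - 1)) * γ / (M - B₂ * γ))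
        / (C₀ + C₁ * K + D₀ * M + D₁ * M * K)) := by
  have hα2 : 0 < α - 2 := by linarith
  have hα1 : 0 < α - 1 := by linarith
  set t : ℝ := B₂ * γ with ht
  have hq0 : 0 < q := by
    rw [hq]; positivity
  have hB₂0 : 0 < B₂ := by
    rw [hB₂]; positivity
  have ht0 : 0 < t := by positivity
  -- numerator and denominator
  set N : ℝ → ℝ := fun M => 1 - (K / S) * (K * q + M / (α - 1)) * γ / (M - t) with hN
  set D : ℝ → ℝ := fun M => C₀ + C₁ * K + D₀ * M + D₁ * M * K with hD
  have hDpos : ∀ x ∈ Set.Ioi t, 0 < D x := by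
    intro x hx
    have hx0 : 0 < x := lt_trans ht0 hx
    simp only [hD]
    positivity
  -- N is concave on Ioi t
  set c₂ : ℝ := γ * (K / S) * (K * q + t / (α - 1)) with hc₂
  have hc₂0 : 0 ≤ c₂ := by rw [hc₂]; positivity
  have hNconc : ConcaveOn ℝ (Set.Ioi t) N := by
    have hg := inv_shift_convexOn t
    have h1 : ConcaveOn ℝ (Set.Ioi t)
        (fun x => (1 - γ * K / (S * (α - 1))) + -(c₂ • (x - t)⁻¹)) := by
      exact (concaveOn_const _ (convex_Ioi t)).add (hg.smul hc₂0).neg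
    refine h1.congr (fun x hx => ?_)
    have hxt : x - t ≠ 0 := sub_ne_zero.mpr (ne_of_gt hx)
    simp only [hN, smul_eq_mul, hc₂]
    field_simp
    ring
  -- quasiconcavity
  intro r
  have hconc : ConcaveOn ℝ (Set.Ioi t) (fun x => N x - r * D x) := by
    refine hNconc.sub ?_
    have : ConvexOn ℝ (Set.Ioi t)
        (fun x => (r * D₀ + r * (D₁ * K)) * x + r * (C₀ + C₁ * K)) :=
      affine_convexOn _ (convex_Ioi t) _ _
    exact this.congr (fun x _ => by simp only [hD]; ring)
  have hconv := hconc.convex_ge 0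
  convert hconv using 1
  ext x
  simp only [Set.mem_setOf_eq, Set.mem_sep_iff, hN, hD]
  constructor
  · rintro ⟨hx, hr⟩
    have hDx : (0:ℝ) < C₀ + C₁ * K + D₀ * x + D₁ * x * K := hDpos x hx
    rw [le_div_iff₀ hDx] at hr
    exact ⟨hx, by linarith⟩
  · rintro ⟨hx, hr⟩
    have hDx : (0:ℝ) < C₀ + C₁ * K + D₀ * x + D₁ * x * K := hDpos x hx
    refine ⟨hx, ?_⟩
    rw [le_div_iff₀ hDx]
    linarith
end

section
/- Let K⋆(C₀) = (√((GC₀)² + C₀b + C₀Ga) − GC₀)/(b + Ga) with G, a, b > 0. Then K⋆ is a strictly increasing function of C₀ > 0. -/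
/-!
Rationalising, `√((G C)² + C s) - G C = C (√(G² + s / C) - G)` and `(√(G² + s / C))² - G² = s / C`,
so `K⋆(C) = 1 / (√(G² + s / C) + G)` with `s = b + G a > 0`. As `C` grows, `s / C` shrinks, so the
denominator decreases and stays positive (the root exceeds `|G|`), hence `K⋆` increases.
-/

open Real Set

lemma abs_lt_sqrt_sq_add {G t : ℝ} (ht : 0 < t) : |G| < √(G ^ 2 + t) := by
  rw [← sqrt_sq_eq_abs]
  exact sqrt_lt_sqrt (sq_nonneg G) (by linarith)

lemma sqrt_sq_add_add_pos (G : ℝ) {t : ℝ} (ht : 0 < t) : 0 < √(G ^ 2 + t) + G := by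
  linarith [abs_lt_sqrt_sq_add (G := G) ht, neg_abs_le G]

lemma sqrt_sq_mul_add_sub_div_eq_inv (G : ℝ) {s C : ℝ} (hs : 0 < s) (hC : 0 < C) :
    (√((G * C) ^ 2 + C * s) - G * C) / s = (√(G ^ 2 + s / C) + G)⁻¹ := by
  set r := √(G ^ 2 + s / C)
  have hpos : 0 < r + G := sqrt_sq_add_add_pos G (div_pos hs hC)
  have hr : C * (r ^ 2 - G ^ 2) = s := by
    rw [sq_sqrt (by positivity)]
    field_simp
    ring
  have hroot : √((G * C) ^ 2 + C * s) = C * r := by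
    rw [show (G * C) ^ 2 + C * s = C ^ 2 * (G ^ 2 + s / C) by field_simp, sqrt_mul (sq_nonneg C),
      sqrt_sq hC.le]
  rw [hroot, div_eq_iff hs.ne', eq_comm, inv_mul_eq_iff_eq_mul₀ hpos.ne']
  linear_combination -hr

lemma strictAntiOn_sqrt_sq_add_div_add (G : ℝ) {s : ℝ} (hs : 0 < s) :
    StrictAntiOn (fun C : ℝ => √(G ^ 2 + s / C) + G) (Ioi 0) := by
  intro x (hx : 0 < x) y (hy : 0 < y) hxy
  show √(G ^ 2 + s / y) + G < √(G ^ 2 + s / x) + G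
  gcongr

lemma strictMonoOn_sqrt_sq_mul_add_sub_div (G : ℝ) {s : ℝ} (hs : 0 < s) :
    StrictMonoOn (fun C : ℝ => (√((G * C) ^ 2 + C * s) - G * C) / s) (Ioi 0) := by
  intro x hx y hy hxy
  simp only [sqrt_sq_mul_add_sub_div_eq_inv G hs hx, sqrt_sq_mul_add_sub_div_eq_inv G hs hy]
  exact inv_strictAntiOn (sqrt_sq_add_add_pos G (div_pos hs hy))
    (sqrt_sq_add_add_pos G (div_pos hs hx)) (strictAntiOn_sqrt_sq_add_div_add G hs hx hy hxy)

/-- K⋆ is strictly increasing in the static circuit power C₀. -/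
theorem K_star_strictMono_in_C0
    (G a b : ℝ) (hG : 0 < G) (ha : 0 < a) (hb : 0 < b) :
    StrictMonoOn (fun C₀ : ℝ =>
      (Real.sqrt ((G * C₀) ^ 2 + C₀ * b + C₀ * G * a) - G * C₀) / (b + G * a))
      (Set.Ioi 0) := by
  have hs : 0 < b + G * a := by positivity
  convert strictMonoOn_sqrt_sq_mul_add_sub_div G hs using 5 with C
  ring
end

section
/- Let K⋆(a) = (√((GC₀)² + C₀b + C₀Ga) − GC₀)/(b + Ga) with G, C₀, b > 0. Then K⋆ is strictly decreasing in a > 0. -/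
/-- K⋆ is strictly decreasing in a = C₁ + D₀c̄. -/
theorem K_star_strictAnti_in_a
    (G C₀ b : ℝ) (hG : 0 < G) (hC₀ : 0 < C₀) (hb : 0 < b) :
    StrictAntiOn (fun a : ℝ =>
      (Real.sqrt ((G * C₀) ^ 2 + C₀ * b + C₀ * G * a) - G * C₀) / (b + G * a))
      (Set.Ioi 0) := by
  have key : ∀ a : ℝ, 0 < a →
      (Real.sqrt ((G * C₀) ^ 2 + C₀ * b + C₀ * G * a) - G * C₀) / (b + G * a)
        = C₀ / (Real.sqrt ((G * C₀) ^ 2 + C₀ * b + C₀ * G * a) + G * C₀) := by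
    intro a ha
    have hpos : 0 < b + G * a := by positivity
    have harg : 0 ≤ (G * C₀) ^ 2 + C₀ * b + C₀ * G * a := by positivity
    have hsq := Real.sq_sqrt harg
    have hsn : 0 ≤ Real.sqrt ((G * C₀) ^ 2 + C₀ * b + C₀ * G * a) := Real.sqrt_nonneg _
    have hden : 0 < Real.sqrt ((G * C₀) ^ 2 + C₀ * b + C₀ * G * a) + G * C₀ := by positivity
    rw [div_eq_div_iff hpos.ne' hden.ne']
    nlinarith [hsq]
  intro x hx y hy hxy
  simp only [Set.mem_Ioi] at hx hy
  simp only [key x hx, key y hy]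
  have hargx : 0 ≤ (G * C₀) ^ 2 + C₀ * b + C₀ * G * x := by positivity
  have hlt : Real.sqrt ((G * C₀) ^ 2 + C₀ * b + C₀ * G * x)
      < Real.sqrt ((G * C₀) ^ 2 + C₀ * b + C₀ * G * y) := by
    apply Real.sqrt_lt_sqrt hargx
    nlinarith [mul_lt_mul_of_pos_left hxy (mul_pos hC₀ hG)]
  have hdx : 0 < Real.sqrt ((G * C₀) ^ 2 + C₀ * b + C₀ * G * x) + G * C₀ := by positivity
  exact div_lt_div_of_pos_left hC₀ hdx (by linarith)
end

section
/- Fix K, S, C₀, C₁, D₀, D₁ > 0, α > 2. The critical point M⋆ in equation (19) [M⋆ = K(a₁K + a₂ + √(...))/(1 − a₀K) with a₀ = γ/(S(α−1)), a₁ = (γ/S)(4/(α−2)² + 1/(α−1) + 2/(α−2)), a₂ = (1 + 2/(α−2))γ] is, as a function of γ (on the range where a₀K < 1), strictly increasing in γ. -/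
/-!
Write `A = a₁K + a₂`, `B = a₁K + a₀a₂K` and `d = 1 - a₀K`. The radicand of (19) factors as
`B (A + d E)` with `E = (C₀ + C₁K)/(D₀K + D₁K²) > 0`, so that
`M⋆ = K (A/d + √((B/d)(A/d + E)))`.
When γ grows, `A` and `B` grow strictly while `d` shrinks and stays positive, hence `A/d` and `B/d`
grow strictly, and so does every term of this expression.
-/

section StrictMonoOn

variable {α : Type*} [Preorder α] {s : Set α}

lemma StrictMonoOn.mul_of_nonneg {M₀ : Type*} [MulZeroClass M₀] [Preorder M₀]
    [PosMulStrictMono M₀] [MulPosMono M₀] {f g : α → M₀}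
    (hf : StrictMonoOn f s) (hg : StrictMonoOn g s)
    (hf₀ : ∀ x ∈ s, 0 ≤ f x) (hg₀ : ∀ x ∈ s, 0 ≤ g x) :
    StrictMonoOn (fun x => f x * g x) s :=
  fun x hx _ hy h => mul_lt_mul'' (hf hx hy h) (hg hx hy h) (hf₀ x hx) (hg₀ x hx)

lemma StrictMonoOn.div_of_antitoneOn {𝕜 : Type*} [Semifield 𝕜] [LinearOrder 𝕜]
    [IsStrictOrderedRing 𝕜] {f g : α → 𝕜}
    (hf : StrictMonoOn f s) (hg : AntitoneOn g s)
    (hf₀ : ∀ x ∈ s, 0 ≤ f x) (hg₀ : ∀ x ∈ s, 0 < g x) :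
    StrictMonoOn (fun x => f x / g x) s :=
  fun x hx y hy h =>
    calc f x / g x ≤ f x / g y := div_le_div_of_nonneg_left (hf₀ x hx) (hg₀ y hy) (hg hx hy h.le)
      _ < f y / g y := div_lt_div_of_pos_right (hf hx hy h) (hg₀ y hy)

end StrictMonoOn

noncomputable def optimalAntennas (K C D a₀ a₁ a₂ : ℝ) : ℝ :=
  K * (a₁ * K + a₂
    + √(a₁ * a₂ * K + a₁ ^ 2 * K ^ 2 + (1 - a₀ * K) * (a₁ * K + a₀ * a₂ * K) * C / D
      + a₀ * a₁ * a₂ * K ^ 2 + a₀ * a₂ ^ 2 * K)) / (1 - a₀ * K)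

lemma optimalAntennas_eq {K C D a₀ a₁ a₂ : ℝ} (hd : 0 < 1 - a₀ * K) :
    optimalAntennas K C D a₀ a₁ a₂ =
      K * ((a₁ * K + a₂) / (1 - a₀ * K)
        + √((a₁ * K + a₀ * a₂ * K) / (1 - a₀ * K) * ((a₁ * K + a₂) / (1 - a₀ * K) + C / D))) := by
  have hradicand : a₁ * a₂ * K + a₁ ^ 2 * K ^ 2 + (1 - a₀ * K) * (a₁ * K + a₀ * a₂ * K) * C / D
      + a₀ * a₁ * a₂ * K ^ 2 + a₀ * a₂ ^ 2 * K
      = (a₁ * K + a₀ * a₂ * K) / (1 - a₀ * K) * ((a₁ * K + a₂) / (1 - a₀ * K) + C / D)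
        * (1 - a₀ * K) ^ 2 := by
    rw [div_add' _ _ _ hd.ne', div_mul_div_comm, ← pow_two,
      div_mul_cancel₀ _ (pow_ne_zero 2 hd.ne')]
    ring
  rw [optimalAntennas, hradicand, Real.sqrt_mul' _ (sq_nonneg _), Real.sqrt_sq hd.le,
    mul_div_assoc, add_div, mul_div_cancel_right₀ _ hd.ne']

theorem strictMonoOn_optimalAntennas {α : Type*} [Preorder α] {s : Set α} {a₀ a₁ a₂ : α → ℝ}
    {K C D : ℝ} (hK : 0 < K) (hCD : 0 ≤ C / D)
    (ha₀ : MonotoneOn a₀ s) (ha₁ : StrictMonoOn a₁ s) (ha₂ : MonotoneOn a₂ s)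
    (ha₀₀ : ∀ x ∈ s, 0 ≤ a₀ x) (ha₁₀ : ∀ x ∈ s, 0 ≤ a₁ x) (ha₂₀ : ∀ x ∈ s, 0 ≤ a₂ x)
    (ha₀K : ∀ x ∈ s, a₀ x * K < 1) :
    StrictMonoOn (fun x => optimalAntennas K C D (a₀ x) (a₁ x) (a₂ x)) s := by
  have hA : StrictMonoOn (fun x => a₁ x * K + a₂ x) s := fun x hx y hy h =>
    add_lt_add_of_lt_of_le (mul_lt_mul_of_pos_right (ha₁ hx hy h) hK) (ha₂ hx hy h.le)
  have hB : StrictMonoOn (fun x => a₁ x * K + a₀ x * a₂ x * K) s := fun x hx y hy h =>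
    add_lt_add_of_lt_of_le (mul_lt_mul_of_pos_right (ha₁ hx hy h) hK)
      (mul_le_mul_of_nonneg_right
        (mul_le_mul (ha₀ hx hy h.le) (ha₂ hx hy h.le) (ha₂₀ x hx) (ha₀₀ y hy)) hK.le)
  have hd : AntitoneOn (fun x => 1 - a₀ x * K) s := fun x hx y hy h =>
    sub_le_sub_left (mul_le_mul_of_nonneg_right (ha₀ hx hy h) hK.le) 1
  have hd₀ : ∀ x ∈ s, 0 < 1 - a₀ x * K := fun x hx => sub_pos.2 (ha₀K x hx)
  have hA₀ : ∀ x ∈ s, 0 ≤ a₁ x * K + a₂ x := fun x hx =>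
    add_nonneg (mul_nonneg (ha₁₀ x hx) hK.le) (ha₂₀ x hx)
  have hB₀ : ∀ x ∈ s, 0 ≤ a₁ x * K + a₀ x * a₂ x * K := fun x hx =>
    add_nonneg (mul_nonneg (ha₁₀ x hx) hK.le)
      (mul_nonneg (mul_nonneg (ha₀₀ x hx) (ha₂₀ x hx)) hK.le)
  have hAd₀ : ∀ x ∈ s, 0 ≤ (a₁ x * K + a₂ x) / (1 - a₀ x * K) := fun x hx =>
    div_nonneg (hA₀ x hx) (hd₀ x hx).le
  have hBd₀ : ∀ x ∈ s, 0 ≤ (a₁ x * K + a₀ x * a₂ x * K) / (1 - a₀ x * K) := fun x hx =>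
    div_nonneg (hB₀ x hx) (hd₀ x hx).le
  have hAd := hA.div_of_antitoneOn hd hA₀ hd₀
  have hradicand := (hB.div_of_antitoneOn hd hB₀ hd₀).mul_of_nonneg (hAd.add_const (C / D))
    hBd₀ fun x hx => add_nonneg (hAd₀ x hx) hCD
  have hsum := hAd.add (Real.strictMonoOn_sqrt.comp hradicand
    fun x hx => Set.mem_Ici.2 (mul_nonneg (hBd₀ x hx) (add_nonneg (hAd₀ x hx) hCD)))
  exact StrictMonoOn.congr (fun x hx y hy h => mul_lt_mul_of_pos_left (hsum hx hy h) hK)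
    fun x hx => (optimalAntennas_eq (hd₀ x hx)).symm

/-- The EE-optimal number of antennas M⋆ of eq. (19) is strictly increasing
in the SINR target γ (on the range where a₀K < 1, i.e. γ < S(α−1)/K). -/
theorem M_star_strictMono_in_gamma
    (K S C₀ C₁ D₀ D₁ α : ℝ) (hK : 0 < K) (hS : 0 < S)
    (hC₀ : 0 < C₀) (hC₁ : 0 < C₁) (hD₀ : 0 < D₀) (hD₁ : 0 < D₁) (hα : 2 < α) :
    StrictMonoOn (fun γ : ℝ =>
      let a₀ := γ / (S * (α - 1))
      let a₁ := (γ / S) * (4 / (α - 2) ^ 2 + 1 / (α - 1) + 2 / (α - 2))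
      let a₂ := (1 + 2 / (α - 2)) * γ
      K * (a₁ * K + a₂
        + Real.sqrt (a₁ * a₂ * K + a₁ ^ 2 * K ^ 2
          + (1 - a₀ * K) * (a₁ * K + a₀ * a₂ * K) * (C₀ + C₁ * K) / (D₀ * K + D₁ * K ^ 2)
          + a₀ * a₁ * a₂ * K ^ 2 + a₀ * a₂ ^ 2 * K)) / (1 - a₀ * K))
      (Set.Ioo 0 (S * (α - 1) / K)) := by
  have hα₁ : 0 < α - 1 := by linarith
  have hα₂ : 0 < α - 2 := by linarith
  have hc₁ : 0 < 4 / (α - 2) ^ 2 + 1 / (α - 1) + 2 / (α - 2) := by positivity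
  have hc₂ : 0 < 1 + 2 / (α - 2) := by positivity
  refine strictMonoOn_optimalAntennas (a₀ := fun γ => γ / (S * (α - 1)))
    (a₁ := fun γ => (γ / S) * (4 / (α - 2) ^ 2 + 1 / (α - 1) + 2 / (α - 2)))
    (a₂ := fun γ => (1 + 2 / (α - 2)) * γ) hK (by positivity)
    (fun x _ y _ h => by beta_reduce; gcongr) (fun x _ y _ h => by beta_reduce; gcongr)
    (fun x _ y _ h => by beta_reduce; gcongr)
    (fun x hx => by have := hx.1; positivity)
    (fun x hx => by have := hx.1; positivity)
    (fun x hx => by have := hx.1; positivity) fun x hx => ?_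
  rw [div_mul_eq_mul_div, div_lt_one (by positivity), ← lt_div_iff₀ hK]
  exact hx.2
end

section
/- For α > 2 and any β ≥ 1, K ≥ 1 with βK ≤ S, the SINR expression (6) satisfies SINR ≤ M(α−1)β/ (M + β(α−1)·(K + σ²/ρ)(1+σ²/ρ)) < (α−1)β; in particular SINR is bounded above by (α−1)β uniformly in M. -/
/-- Pilot contamination ceiling: the SINR (6) is bounded by
M(α−1)β/(M + β(α−1)(K+σ²/ρ)(1+σ²/ρ)), which is itself below (α−1)β. -/
theorem sinr_pilot_contamination_ceiling
    (M K S β ρ σ2 α : ℝ) (hM : 0 < M) (hρ : 0 < ρ) (hσ : 0 < σ2)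
    (hα : 2 < α) (hβ : 1 ≤ β) (hK : 1 ≤ K) (hβK : β * K ≤ S) :
    M / ((K + σ2 / ρ) * (1 + 2 / (β * (α - 2)) + σ2 / ρ)
        + (2 * K / (α - 2)) * (1 + σ2 / ρ)
        + (K / β) * (4 / (α - 2) ^ 2 + 1 / (α - 1))
        + M / (β * (α - 1)))
      ≤ M * (α - 1) * β / (M + β * (α - 1) * (K + σ2 / ρ) * (1 + σ2 / ρ)) ∧
    M * (α - 1) * β / (M + β * (α - 1) * (K + σ2 / ρ) * (1 + σ2 / ρ))
      < (α - 1) * β := by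
  have hb : 0 < α - 2 := by linarith
  have ha : 0 < α - 1 := by linarith
  have hβ0 : 0 < β := by linarith
  have hK0 : 0 < K := by linarith
  have ht : 0 < σ2 / ρ := div_pos hσ hρ
  set t := σ2 / ρ with htdef
  have hc : 0 < β * (α - 1) * (K + t) * (1 + t) := by positivity
  have hE : 0 < (K + t) * (1 + t) + M / (β * (α - 1)) := by positivity
  have hD : (K + t) * (1 + t) + M / (β * (α - 1))
      ≤ (K + t) * (1 + 2 / (β * (α - 2)) + t)
        + (2 * K / (α - 2)) * (1 + t)
        + (K / β) * (4 / (α - 2) ^ 2 + 1 / (α - 1))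
        + M / (β * (α - 1)) := by
    have h1 : (K + t) * (1 + t) ≤ (K + t) * (1 + 2 / (β * (α - 2)) + t) := by
      have : (0:ℝ) < 2 / (β * (α - 2)) := by positivity
      nlinarith [mul_pos (mul_pos ha hβ0) hc]
    have h2 : 0 ≤ (2 * K / (α - 2)) * (1 + t) := by positivity
    have h3 : 0 ≤ (K / β) * (4 / (α - 2) ^ 2 + 1 / (α - 1)) := by positivity
    linarith
  have heq : M * (α - 1) * β / (M + β * (α - 1) * (K + t) * (1 + t))
      = M / ((K + t) * (1 + t) + M / (β * (α - 1))) := by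
    rw [div_eq_div_iff (by positivity) (by positivity)]
    field_simp
    ring
  constructor
  · rw [heq]
    exact div_le_div_of_nonneg_left hM.le hE hD
  · rw [div_lt_iff₀ (by positivity)]
    nlinarith [mul_pos (mul_pos ha hβ0) hc]
end

section
/- Let EE(K, M) = K(1 − (K/S)·(Kq + M/(α−1))γ/(M − Kpγ))·L/(C₀ + C₁K + D₀M + D₁MK), with q = 4/(α−2)² + 1/(α−1) + 2/(α−2), p = 1 + 2/(α−2), L = log₂(1+γ), and parameters S, γ, C₀, C₁, D₀, D₁ > 0, α > 2. Then for fixed M, EE(·, M) is quasi-concave in K on the feasible set {K > 0 : M > Kpγ and the numerator is positive}. -/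
/-!
For fixed `M` the numerator `K (1 - (γ/S) K (qK + b)/(M - cK)) L`, with `b = M/(α-1)` and
`c = pγ`, equals `L K - (Lγ/S) K²(qK + b)/(M - cK)`. On `0 < K < M/c` the quotient
`K²(qK + b)/(M - cK)` is convex, being a product of two nonnegative, increasing, convex factors,
so the numerator is concave. The feasible set is then a strict superlevel set of a concave
function, hence convex, and a nonnegative concave function divided by a positive affine one is
quasi-concave: for `r > 0` the superlevel set `{f / g ≥ r}` is `{f - r g ≥ 0}`.
-/

open Set

section QuasiconcaveDiv

variable {𝕜 E : Type*} [Field 𝕜] [LinearOrder 𝕜] [IsStrictOrderedRing 𝕜] [AddCommMonoid E]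
  [Module 𝕜 E] {s : Set E} {f g : E → 𝕜}

theorem ConcaveOn.quasiconcaveOn_div (hf : ConcaveOn 𝕜 s f) (hg : ConvexOn 𝕜 s g)
    (hf₀ : ∀ x ∈ s, 0 ≤ f x) (hg₀ : ∀ x ∈ s, 0 < g x) :
    QuasiconcaveOn 𝕜 s fun x => f x / g x := by
  intro r
  rcases le_or_gt r 0 with hr | hr
  · convert hf.1
    exact sep_eq_self_iff_mem_true.2 fun x hx => hr.trans (div_nonneg (hf₀ x hx) (hg₀ x hx).le)
  · convert (hf.sub (hg.smul hr.le)).convex_ge 0 using 1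
    refine sep_ext_iff.2 fun x hx => ?_
    rw [Pi.sub_apply, sub_nonneg, smul_eq_mul, le_div_iff₀ (hg₀ x hx), mul_comm]

end QuasiconcaveDiv

section OneVariable

variable {𝕜 : Type*} [Field 𝕜] [LinearOrder 𝕜] [IsStrictOrderedRing 𝕜] {M a b c : 𝕜}

theorem convexOn_mul_add (a b : 𝕜) : ConvexOn 𝕜 univ fun x => a * x + b :=
  ((LinearMap.mulLeft 𝕜 a).convexOn convex_univ).add_const b

theorem sub_mul_pos_of_lt_div (hc : 0 < c) {x : 𝕜} (hx : x < M / c) : 0 < M - c * x := by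
  rw [lt_div_iff₀ hc] at hx
  linarith

theorem convexOn_inv_sub_mul (hc : 0 < c) : ConvexOn 𝕜 (Iio (M / c)) fun x => (M - c * x)⁻¹ := by
  have hline : ∀ x, AffineMap.lineMap M (M - c) x = M - c * x := fun x => by
    rw [AffineMap.lineMap_apply_ring']; ring
  have h := (convexOn_zpow (𝕜 := 𝕜) (-1)).comp_affineMap (AffineMap.lineMap M (M - c))
  have hpre : AffineMap.lineMap M (M - c) ⁻¹' Ioi (0 : 𝕜) = Iio (M / c) := by
    ext x
    rw [mem_preimage, hline, mem_Ioi, mem_Iio, lt_div_iff₀ hc, sub_pos, mul_comm]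
  rw [hpre] at h
  refine h.congr fun x _ => ?_
  simp [hline]

theorem monotoneOn_inv_sub_mul (hc : 0 < c) :
    MonotoneOn (fun x => (M - c * x)⁻¹) (Iio (M / c)) := fun _ _ _ hy hxy =>
  inv_anti₀ (sub_mul_pos_of_lt_div hc hy) (by gcongr)

theorem ConvexOn.div_sub_mul {s : Set 𝕜} {f : 𝕜 → 𝕜} (hc : 0 < c) (hf : ConvexOn 𝕜 s f)
    (hf₀ : ∀ x ∈ s, 0 ≤ f x) (hfm : MonotoneOn f s) :
    ConvexOn 𝕜 (s ∩ Iio (M / c)) fun x => f x / (M - c * x) := by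
  have hconv : Convex 𝕜 (s ∩ Iio (M / c)) := hf.1.inter (convex_Iio _)
  refine ConvexOn.congr ?_ fun x _ => (div_eq_mul_inv (f x) (M - c * x)).symm
  exact (hf.subset inter_subset_left hconv).mul
    ((convexOn_inv_sub_mul hc).subset inter_subset_right hconv)
    (fun x hx => hf₀ x hx.1) (fun x hx => (inv_pos.2 (sub_mul_pos_of_lt_div hc hx.2)).le)
    ((hfm.mono inter_subset_left).monovaryOn
      ((monotoneOn_inv_sub_mul hc).mono inter_subset_right))

theorem monotoneOn_pow_mul_add (n : ℕ) (ha : 0 ≤ a) (hb : 0 ≤ b) :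
    MonotoneOn (fun x => x ^ n * (a * x + b)) (Ici 0) :=
  pow_left_monotoneOn.mul (fun _ _ _ _ hxy => by gcongr)
    (fun x hx => pow_nonneg hx n) (fun x (hx : 0 ≤ x) => by positivity)

theorem convexOn_pow_mul_add (n : ℕ) (ha : 0 ≤ a) (hb : 0 ≤ b) :
    ConvexOn 𝕜 (Ici 0) fun x => x ^ n * (a * x + b) :=
  (convexOn_pow n).mul ((convexOn_mul_add a b).subset (subset_univ _) (convex_Ici 0))
    (fun x hx => pow_nonneg hx n) (fun x (hx : 0 ≤ x) => by positivity)
    (pow_left_monotoneOn.monovaryOn fun _ _ _ _ hxy => by gcongr)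

theorem convexOn_pow_mul_add_div_sub_mul (n : ℕ) (ha : 0 ≤ a) (hb : 0 ≤ b) (hc : 0 < c) :
    ConvexOn 𝕜 (Ioo 0 (M / c)) fun x => x ^ n * (a * x + b) / (M - c * x) :=
  ((convexOn_pow_mul_add n ha hb).div_sub_mul hc (fun x (hx : 0 ≤ x) => by positivity)
    (monotoneOn_pow_mul_add n ha hb)).subset (fun _ hx => ⟨hx.1.le, hx.2⟩) (convex_Ioo _ _)

end OneVariable

/-- The EE objective (14) is quasi-concave in K for fixed M on the feasible set. -/
theorem ee_quasiconcave_in_K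
    (M S γ C₀ C₁ D₀ D₁ α L : ℝ) (hM : 0 < M) (hS : 0 < S) (hγ : 0 < γ)
    (hC₀ : 0 < C₀) (hC₁ : 0 < C₁) (hD₀ : 0 < D₀) (hD₁ : 0 < D₁) (hα : 2 < α)
    (q p : ℝ)
    (hq : q = 4 / (α - 2) ^ 2 + 1 / (α - 1) + 2 / (α - 2))
    (hp : p = 1 + 2 / (α - 2))
    (hL : L = Real.logb 2 (1 + γ)) :
    QuasiconcaveOn ℝ
      {K : ℝ | 0 < K ∧ K * p * γ < M ∧
        0 < 1 - (K / S) * (K * q + M / (α - 1)) * γ / (M - K * p * γ)}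
      (fun K : ℝ =>
        K * (1 - (K / S) * (K * q + M / (α - 1)) * γ / (M - K * p * γ)) * L
          / (C₀ + C₁ * K + D₀ * M + D₁ * M * K)) := by
  have hα₁ : 0 < α - 1 := by linarith
  have hα₂ : 0 < α - 2 := by linarith
  have hq₀ : 0 ≤ q := hq ▸ by positivity
  have hc : 0 < p * γ := mul_pos (hp ▸ by positivity) hγ
  have hL₀ : 0 < L := hL ▸ Real.logb_pos one_lt_two (by linarith)
  have hnum : ConcaveOn ℝ (Ioo 0 (M / (p * γ)))
      fun K => K * (1 - (K / S) * (K * q + M / (α - 1)) * γ / (M - K * p * γ)) * L := by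
    refine (((concaveOn_id (convex_Ioo _ _)).smul hL₀.le).sub
      ((convexOn_pow_mul_add_div_sub_mul 2 hq₀ (div_pos hM hα₁).le hc).smul (c := L * γ / S)
        (by positivity))).congr fun K _ => ?_
    simp only [Pi.sub_apply, id, smul_eq_mul]
    ring
  have hfeas : {K : ℝ | 0 < K ∧ K * p * γ < M ∧
        0 < 1 - (K / S) * (K * q + M / (α - 1)) * γ / (M - K * p * γ)} =
      {K ∈ Ioo 0 (M / (p * γ)) |
        0 < K * (1 - (K / S) * (K * q + M / (α - 1)) * γ / (M - K * p * γ)) * L} := by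
    ext K
    simp only [mem_ofPred_eq, mem_Ioo, lt_div_iff₀ hc, and_assoc]
    refine and_congr_right fun hK => and_congr (by rw [mul_assoc]) ?_
    rw [mul_pos_iff_of_pos_right hL₀, mul_pos_iff_of_pos_left hK]
  have hden : ConvexOn ℝ univ fun K => C₀ + C₁ * K + D₀ * M + D₁ * M * K :=
    (convexOn_mul_add (C₁ + D₁ * M) (C₀ + D₀ * M)).congr fun K _ => by ring
  have hconv := hnum.convex_gt 0
  rw [hfeas]
  exact (hnum.subset (sep_subset _ _) hconv).quasiconcaveOn_div
    (hden.subset (subset_univ _) hconv) (fun K hK => hK.2.le)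
    (fun K hK => by have := hK.1.1; positivity)
end
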